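/- (Second bias term in E[σ̂²].) Let U₁,…,Uₙ be i.i.d. pairs Uᵢ = (Xᵢ,Yᵢ) with Xᵢ ~ P, Yᵢ ~ Q, and n ≥ 4. Then | (1/n⁴) Σ_{i,j,a,b=1}^n E[H*ᵢⱼ H*ₐᵦ] − (E[H*₁₂])² | ≤ 18 ν² (6/n − 11/n² + 6/n³). -/

import Mathlib

open MeasureTheory ProbabilityTheory Filter Finset

noncomputable def Hstar {𝒳 : Type*} (k : 𝒳 → 𝒳 → ℝ) (u v : 𝒳 × 𝒳) : ℝ :=
  k u.1 v.1 - k u.1 v.2 - k u.2 v.1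

/-! For pairwise distinct indices `i, j, a, b` the pairs `(Uᵢ, Uⱼ)` and `(Uₐ, U_b)` are
independent, so `E[H*ᵢⱼ H*ₐᵦ] = (E[H*₁₂])²`. Only the `n⁴ − n(n−1)(n−2)(n−3) = 6n³ − 11n² + 6n`
quadruples with a repeated index contribute to the difference, each by at most
`|E[H*ᵢⱼ H*ₐᵦ]| + (E[H*₁₂])² ≤ 9ν² + 9ν²`, since `|H*| ≤ 3ν`. -/

theorem Nat.cast_descFactorial_four {R : Type*} [CommRing R] (n : ℕ) :
    (n.descFactorial 4 : R) = n * (n - 1) * (n - 2) * (n - 3) := by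
  obtain hn | hn := lt_or_ge n 4
  · interval_cases n <;> norm_num [Nat.descFactorial]
  · simp only [Nat.descFactorial, Nat.sub_zero, mul_one]
    push_cast [Nat.cast_sub (by omega : 3 ≤ n), Nat.cast_sub (by omega : 2 ≤ n),
      Nat.cast_sub (by omega : 1 ≤ n)]
    ring

section Counting

variable {ι : Type*}

def quadrupleEquivFun : ι × ι × ι × ι ≃ (Fin 4 → ι) where
  toFun q := ![q.1, q.2.1, q.2.2.1, q.2.2.2]
  invFun f := (f 0, f 1, f 2, f 3)
  left_inv _ := rfl
  right_inv f := by ext x; fin_cases x <;> rfl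

variable [Fintype ι] [DecidableEq ι]

theorem card_filter_injective_quadrupleEquivFun :
    #{q : ι × ι × ι × ι | Function.Injective (quadrupleEquivFun q)} =
      (Fintype.card ι).descFactorial 4 :=
  calc _ = Fintype.card (Fin 4 ↪ ι) := by
        rw [← Fintype.card_subtype]
        exact Fintype.card_congr <| (quadrupleEquivFun.subtypeEquiv fun _ => Iff.rfl).trans
          (Equiv.subtypeInjectiveEquivEmbedding _ _)
    _ = _ := by rw [Fintype.card_embedding_eq, Fintype.card_fin]

theorem cast_card_filter_not_injective_quadrupleEquivFun :
    (#{q : ι × ι × ι × ι | ¬ Function.Injective (quadrupleEquivFun q)} : ℝ) =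
      6 * (Fintype.card ι : ℝ) ^ 3 - 11 * (Fintype.card ι : ℝ) ^ 2 + 6 * Fintype.card ι := by
  have hsplit := card_filter_add_card_filter_not (s := univ)
    fun q : ι × ι × ι × ι => Function.Injective (quadrupleEquivFun q)
  rw [card_filter_injective_quadrupleEquivFun, card_univ] at hsplit
  replace hsplit := congrArg (Nat.cast (R := ℝ)) hsplit
  push_cast [Fintype.card_prod, Nat.cast_descFactorial_four] at hsplit
  linarith

end Counting

theorem abs_sum_sub_card_mul_le {α : Type*} [Fintype α] (p : α → Prop) [DecidablePred p]
    {F : α → ℝ} {c B : ℝ} (hp : ∀ q, p q → F q = c) (hB : ∀ q, |F q - c| ≤ B) :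
    |∑ q, F q - Fintype.card α * c| ≤ #{q | ¬ p q} * B := by
  have hsplit : ∑ q, F q - Fintype.card α * c = ∑ q with ¬ p q, (F q - c) := by
    rw [← card_univ, ← nsmul_eq_mul, ← sum_const, ← sum_sub_distrib,
      ← sum_filter_add_sum_filter_not univ p, sum_eq_zero fun q hq => ?_, zero_add]
    rw [hp q (mem_filter.mp hq).2, sub_self]
  rw [hsplit, ← nsmul_eq_mul]
  exact (abs_sum_le_sum_abs _ _).trans (sum_le_card_nsmul _ _ _ fun q _ => hB q)

theorem abs_integral_le_of_forall_abs_le {α : Type*} [MeasurableSpace α] {μ : Measure α}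
    [IsProbabilityMeasure μ] {f : α → ℝ} {C : ℝ} (h : ∀ x, |f x| ≤ C) :
    |∫ x, f x ∂μ| ≤ C := by
  simpa using norm_integral_le_of_norm_le_const (μ := μ) (f := f) (Eventually.of_forall h)

theorem ProbabilityTheory.IndepFun.integral_comp_eq_integral_integral
    {Ω α β E : Type*} [MeasurableSpace Ω] [MeasurableSpace α] [MeasurableSpace β]
    [NormedAddCommGroup E] [NormedSpace ℝ E] {μ : Measure Ω} [IsFiniteMeasure μ]
    {X : Ω → α} {Y : Ω → β} {mX : Measure α} {mY : Measure β} [SFinite mX] [SFinite mY]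
    (hX : AEMeasurable X μ) (hY : AEMeasurable Y μ) (hXY : IndepFun X Y μ)
    (hlawX : μ.map X = mX) (hlawY : μ.map Y = mY) {f : α → β → E}
    (hf : Integrable (Function.uncurry f) (mX.prod mY)) :
    ∫ ω, f (X ω) (Y ω) ∂μ = ∫ x, ∫ y, f x y ∂mY ∂mX := by
  have hmap : μ.map (fun ω => (X ω, Y ω)) = mX.prod mY := by
    rw [← hlawX, ← hlawY]
    exact (indepFun_iff_map_prod_eq_prod_map_map hX hY).mp hXY
  calc ∫ ω, f (X ω) (Y ω) ∂μ = ∫ p, Function.uncurry f p ∂(μ.map fun ω => (X ω, Y ω)) :=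
        (integral_map (hX.prodMk hY) (hmap ▸ hf.aestronglyMeasurable)).symm
    _ = ∫ p, Function.uncurry f p ∂(mX.prod mY) := by rw [hmap]
    _ = ∫ x, ∫ y, f x y ∂mY ∂mX := integral_prod _ hf

section Hstar

variable {𝒳 Ω : Type*} {k : 𝒳 → 𝒳 → ℝ} {ν : ℝ}

theorem abs_Hstar_le (hbound : ∀ x x', |k x x'| ≤ ν) (u v : 𝒳 × 𝒳) :
    |Hstar k u v| ≤ 3 * ν := by
  have h₁ := abs_le.mp (hbound u.1 v.1)
  have h₂ := abs_le.mp (hbound u.1 v.2)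
  have h₃ := abs_le.mp (hbound u.2 v.1)
  rw [Hstar, abs_le]
  constructor <;> linarith

variable [MeasurableSpace 𝒳] [MeasurableSpace Ω]

theorem measurable_Hstar (hk : Measurable (Function.uncurry k)) :
    Measurable (Function.uncurry (Hstar k)) := by
  have hk' {f g : (𝒳 × 𝒳) × (𝒳 × 𝒳) → 𝒳} (hf : Measurable f) (hg : Measurable g) :
      Measurable fun p => k (f p) (g p) := hk.comp (hf.prodMk hg)
  exact ((hk' measurable_fst.fst measurable_snd.fst).sub
    (hk' measurable_fst.fst measurable_snd.snd)).sub (hk' measurable_fst.snd measurable_snd.fst)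

theorem integrable_Hstar {ρ : Measure ((𝒳 × 𝒳) × (𝒳 × 𝒳))} [IsFiniteMeasure ρ]
    (hk : Measurable (Function.uncurry k)) (hbound : ∀ x x', |k x x'| ≤ ν) :
    Integrable (Function.uncurry (Hstar k)) ρ :=
  .of_bound (measurable_Hstar hk).aestronglyMeasurable (3 * ν)
    (Eventually.of_forall fun p => abs_Hstar_le hbound p.1 p.2)

variable {μ : Measure Ω} [IsProbabilityMeasure μ] {m : Measure (𝒳 × 𝒳)} [IsProbabilityMeasure m]

theorem abs_integral_Hstar_mul_Hstar_sub_sq_le (hbound : ∀ x x', |k x x'| ≤ ν)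
    (V₁ V₂ V₃ V₄ : Ω → 𝒳 × 𝒳) :
    |∫ ω, Hstar k (V₁ ω) (V₂ ω) * Hstar k (V₃ ω) (V₄ ω) ∂μ - (∫ u, ∫ v, Hstar k u v ∂m ∂m) ^ 2|
      ≤ 18 * ν ^ 2 := by
  have hH := abs_Hstar_le hbound
  have hprod : |∫ ω, Hstar k (V₁ ω) (V₂ ω) * Hstar k (V₃ ω) (V₄ ω) ∂μ| ≤ 3 * ν * (3 * ν) :=
    abs_integral_le_of_forall_abs_le fun ω => by
      rw [abs_mul]
      exact mul_le_mul (hH _ _) (hH _ _) (abs_nonneg _) ((abs_nonneg _).trans (hH (V₁ ω) (V₂ ω)))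
  have hmean : |∫ u, ∫ v, Hstar k u v ∂m ∂m| ≤ 3 * ν :=
    abs_integral_le_of_forall_abs_le fun u => abs_integral_le_of_forall_abs_le (hH u)
  have hsq : |(∫ u, ∫ v, Hstar k u v ∂m ∂m) ^ 2| ≤ 3 * ν * (3 * ν) := by
    rw [abs_pow, sq]
    exact mul_le_mul hmean hmean (abs_nonneg _) ((abs_nonneg _).trans hmean)
  calc _ ≤ _ := abs_sub _ _
    _ ≤ 3 * ν * (3 * ν) + 3 * ν * (3 * ν) := add_le_add hprod hsq
    _ = 18 * ν ^ 2 := by ring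

variable {n : ℕ} {U : Fin n → Ω → 𝒳 × 𝒳}

theorem integral_Hstar_of_ne (hk : Measurable (Function.uncurry k))
    (hbound : ∀ x x', |k x x'| ≤ ν) (hU : ∀ i, Measurable (U i)) (hindep : iIndepFun U μ)
    (hlaw : ∀ i, μ.map (U i) = m) {i j : Fin n} (hij : i ≠ j) :
    ∫ ω, Hstar k (U i ω) (U j ω) ∂μ = ∫ u, ∫ v, Hstar k u v ∂m ∂m :=
  (hindep.indepFun hij).integral_comp_eq_integral_integral (hU i).aemeasurable
    (hU j).aemeasurable (hlaw i) (hlaw j) (integrable_Hstar hk hbound)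

theorem integral_Hstar_mul_Hstar_of_injective (hk : Measurable (Function.uncurry k))
    (hbound : ∀ x x', |k x x'| ≤ ν) (hU : ∀ i, Measurable (U i)) (hindep : iIndepFun U μ)
    (hlaw : ∀ i, μ.map (U i) = m) {i j a b : Fin n} (hinj : Function.Injective ![i, j, a, b]) :
    ∫ ω, Hstar k (U i ω) (U j ω) * Hstar k (U a ω) (U b ω) ∂μ =
      (∫ u, ∫ v, Hstar k u v ∂m ∂m) ^ 2 := by
  have hne (r s : Fin 4) (hrs : r ≠ s) : ![i, j, a, b] r ≠ ![i, j, a, b] s := hinj.ne hrs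
  have hpairs : IndepFun (fun ω => (U i ω, U j ω)) (fun ω => (U a ω, U b ω)) μ :=
    hindep.indepFun_prodMk_prodMk hU i j a b (hne 0 2 (by decide)) (hne 0 3 (by decide))
      (hne 1 2 (by decide)) (hne 1 3 (by decide))
  have hH := measurable_Hstar hk
  refine ((hpairs.comp hH hH).integral_fun_mul_eq_mul_integral
      (hH.comp ((hU i).prodMk (hU j))).aestronglyMeasurable
      (hH.comp ((hU a).prodMk (hU b))).aestronglyMeasurable).trans ?_
  rw [sq]
  exact congrArg₂ (· * ·)
    (integral_Hstar_of_ne hk hbound hU hindep hlaw (hne 0 1 (by decide)))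
    (integral_Hstar_of_ne hk hbound hU hindep hlaw (hne 2 3 (by decide)))

end Hstar

theorem second_bias_term_general {𝒳 Ω₀ : Type*} [MeasurableSpace 𝒳] [MeasurableSpace Ω₀]
    (μ : Measure Ω₀) [IsProbabilityMeasure μ]
    (m : Measure (𝒳 × 𝒳)) [IsProbabilityMeasure m]
    (k : 𝒳 → 𝒳 → ℝ) (ν : ℝ)
    (hk : Measurable (Function.uncurry k))
    (hbound : ∀ x x', |k x x'| ≤ ν)
    (n : ℕ) (hn : 4 ≤ n)
    (U : Fin n → Ω₀ → 𝒳 × 𝒳)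
    (hU : ∀ i, Measurable (U i))
    (hindep : iIndepFun U μ)
    (hlaw : ∀ i, Measure.map (U i) μ = m) :
    |(1 / (n : ℝ) ^ 4) *
        (∑ i : Fin n, ∑ j : Fin n, ∑ a : Fin n, ∑ b : Fin n,
          ∫ ω, Hstar k (U i ω) (U j ω) * Hstar k (U a ω) (U b ω) ∂μ) -
        (∫ u, (∫ v, Hstar k u v ∂m) ∂m) ^ 2| ≤
      18 * ν ^ 2 * (6 / (n : ℝ) - 11 / (n : ℝ) ^ 2 + 6 / (n : ℝ) ^ 3) := by
  set S := ∑ i : Fin n, ∑ j : Fin n, ∑ a : Fin n, ∑ b : Fin n,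
    ∫ ω, Hstar k (U i ω) (U j ω) * Hstar k (U a ω) (U b ω) ∂μ
  set E := ∫ u, (∫ v, Hstar k u v ∂m) ∂m
  have hS : |S - (n : ℝ) ^ 4 * E ^ 2| ≤ (6 * (n : ℝ) ^ 3 - 11 * n ^ 2 + 6 * n) * (18 * ν ^ 2) := by
    have h := abs_sum_sub_card_mul_le (fun q => Function.Injective (quadrupleEquivFun q))
      (fun q hq => integral_Hstar_mul_Hstar_of_injective hk hbound hU hindep hlaw hq)
      (fun q => abs_integral_Hstar_mul_Hstar_sub_sq_le (μ := μ) (m := m) hbound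
        (U q.1) (U q.2.1) (U q.2.2.1) (U q.2.2.2))
    simp only [Fintype.sum_prod_type, cast_card_filter_not_injective_quadrupleEquivFun,
      Fintype.card_prod, Fintype.card_fin, Nat.cast_mul] at h
    convert h using 4
    ring
  have hn₀ : (0 : ℝ) < n := by exact_mod_cast (show 0 < n by omega)
  have hrescale : 1 / (n : ℝ) ^ 4 * S - E ^ 2 = (S - (n : ℝ) ^ 4 * E ^ 2) / (n : ℝ) ^ 4 := by
    field_simp
  calc |1 / (n : ℝ) ^ 4 * S - E ^ 2| = |S - (n : ℝ) ^ 4 * E ^ 2| / (n : ℝ) ^ 4 := by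
        rw [hrescale, abs_div, abs_of_pos (pow_pos hn₀ 4)]
    _ ≤ (6 * (n : ℝ) ^ 3 - 11 * n ^ 2 + 6 * n) * (18 * ν ^ 2) / (n : ℝ) ^ 4 := by gcongr
    _ = 18 * ν ^ 2 * (6 / (n : ℝ) - 11 / (n : ℝ) ^ 2 + 6 / (n : ℝ) ^ 3) := by
        field_simp

/-- Second bias term in `E[σ̂²]`:
`|(1/n⁴) ∑_{i,j,a,b} E[H*ᵢⱼ H*ₐᵦ] − (E[H*₁₂])²| ≤ 18ν² (6/n − 11/n² + 6/n³)`,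
where `E[H*₁₂]` is the expectation over two i.i.d. pairs with common law `m`,
written as an iterated integral. -/
theorem second_bias_term {𝒳 Ω₀ : Type*} [MeasurableSpace 𝒳] [MeasurableSpace Ω₀]
    (μ : Measure Ω₀) [IsProbabilityMeasure μ]
    (P Q : Measure 𝒳) [IsProbabilityMeasure P] [IsProbabilityMeasure Q]
    (m : Measure (𝒳 × 𝒳)) [IsProbabilityMeasure m]
    (k : 𝒳 → 𝒳 → ℝ) (ν : ℝ)
    (hk : Measurable (Function.uncurry k))
    (hsymm : ∀ x x', k x x' = k x' x)
    (hbound : ∀ x x', |k x x'| ≤ ν)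
    (n : ℕ) (hn : 4 ≤ n)
    (U : Fin n → Ω₀ → 𝒳 × 𝒳)
    (hU : ∀ i, Measurable (U i))
    (hindep : iIndepFun U μ)
    (hlaw : ∀ i, Measure.map (U i) μ = m)
    (hmP : m.map Prod.fst = P) (hmQ : m.map Prod.snd = Q) :
    |(1 / (n : ℝ) ^ 4) *
        (∑ i : Fin n, ∑ j : Fin n, ∑ a : Fin n, ∑ b : Fin n,
          ∫ ω, Hstar k (U i ω) (U j ω) * Hstar k (U a ω) (U b ω) ∂μ) -
        (∫ u, (∫ v, Hstar k u v ∂m) ∂m) ^ 2| ≤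
      18 * ν ^ 2 * (6 / (n : ℝ) - 11 / (n : ℝ) ^ 2 + 6 / (n : ℝ) ^ 3) :=
  second_bias_term_general μ m k ν hk hbound n hn U hU hindep hlaw
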